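/- Let 0 < β < 2 and let g be continuous and bounded on a curved triangle T with apex at x_c, star-convex with respect to x_c, with curved side c : [0,1] → ℝ² (counterclockwise, c(t) ≠ x_c). For α > 0 with α(2-β) ≥ 1, the weakly singular integral ∫_T g(x)/‖x-x_c‖^β dx equals α ∫₀¹∫₀¹ g(φ_α(ξ,t)) ξ^{α(2-β)-1} ((c(t)-x_c)·c'⊥(t))/‖c(t)-x_c‖^β dξ dt, where φ_α(ξ,t) = x_c + ξ^α(c(t)-x_c), and the ξ-integrand is bounded. -/

import Mathlib

open MeasureTheory

/-- Dot product in the plane. -/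
def dot2 (a b : ℝ × ℝ) : ℝ := a.1 * b.1 + a.2 * b.2

/-- Rotation of a planar vector by `-π/2`. -/
def perp2 (v : ℝ × ℝ) : ℝ × ℝ := (v.2, -v.1)

/-! The map `φ_α(ξ, t) = x_c + ξ^α (c(t) - x_c)` carries `(0,1] × [0,1]` bijectively onto
`T \ {x_c}`, with Jacobian determinant `α ξ^(2α-1) (c(t) - x_c)·c'(t)^⊥ ≥ 0`, and
`‖φ_α(ξ, t) - x_c‖^β = ξ^(αβ) ‖c(t) - x_c‖^β`. The change of variables formula therefore turns
the singular integrand into `α g(φ_α) ξ^(α(2-β)-1) (c(t) - x_c)·c'(t)^⊥ / ‖c(t) - x_c‖^β`, and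
Fubini splits the integral. Because `α(2-β) - 1 ≥ 0` and `x_c ∈ T` by star-convexity, this
integrand is continuous on the compact square `[0,1]²`, which gives both its integrability and its
boundedness. -/

open Set

section ScaledBoundary

variable {E : Type*} [NormedAddCommGroup E] [NormedSpace ℝ E]

noncomputable def scaledBoundaryMap (x_c : E) (c : ℝ → E) (α : ℝ) (p : ℝ × ℝ) : E :=
  x_c + p.1 ^ α • (c p.2 - x_c)

noncomputable def scaledBoundaryFDeriv (x_c : E) (c : ℝ → E) (α : ℝ) (p : ℝ × ℝ) : ℝ × ℝ →L[ℝ] E :=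
  (ContinuousLinearMap.fst ℝ ℝ ℝ).smulRight ((α * p.1 ^ (α - 1)) • (c p.2 - x_c)) +
    (ContinuousLinearMap.snd ℝ ℝ ℝ).smulRight (p.1 ^ α • deriv c p.2)

variable {x_c : E} {c : ℝ → E} {α : ℝ}

theorem norm_scaledBoundaryMap_sub {ξ : ℝ} (hξ : 0 ≤ ξ) (t : ℝ) :
    ‖scaledBoundaryMap x_c c α (ξ, t) - x_c‖ = ξ ^ α * ‖c t - x_c‖ := by
  rw [scaledBoundaryMap, add_sub_cancel_left, norm_smul,
    Real.norm_of_nonneg (Real.rpow_nonneg hξ α)]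

theorem scaledBoundaryMap_zero (hα : α ≠ 0) (t : ℝ) :
    scaledBoundaryMap x_c c α (0, t) = x_c := by
  simp [scaledBoundaryMap, Real.zero_rpow hα]

theorem continuous_scaledBoundaryMap (hα : 0 ≤ α) (hc : Continuous c) :
    Continuous (scaledBoundaryMap x_c c α) :=
  continuous_const.add <|
    ((Real.continuous_rpow_const hα).comp continuous_fst).smul
      ((hc.comp continuous_snd).sub continuous_const)

theorem mapsTo_scaledBoundaryMap_Icc {S : Set ℝ} {T : Set E} (hα : α ≠ 0) (hxc : x_c ∈ T)
    (hT : MapsTo (scaledBoundaryMap x_c c α) (Ioc 0 1 ×ˢ S) T) :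
    MapsTo (scaledBoundaryMap x_c c α) (Icc 0 1 ×ˢ S) T := by
  rintro ⟨ξ, t⟩ ⟨hξ, ht⟩
  rcases hξ.1.eq_or_lt with rfl | hξ0
  · rwa [scaledBoundaryMap_zero hα]
  · exact hT ⟨⟨hξ0, hξ.2⟩, ht⟩

theorem hasFDerivAt_scaledBoundaryMap {p : ℝ × ℝ} (hξ : p.1 ≠ 0)
    (hc : DifferentiableAt ℝ c p.2) :
    HasFDerivAt (scaledBoundaryMap x_c c α) (scaledBoundaryFDeriv x_c c α p) p := by
  have hpow : HasFDerivAt (fun q : ℝ × ℝ => q.1 ^ α)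
      ((α * p.1 ^ (α - 1)) • ContinuousLinearMap.fst ℝ ℝ ℝ) p :=
    (Real.hasDerivAt_rpow_const (Or.inl hξ)).comp_hasFDerivAt p hasFDerivAt_fst
  have hcurve : HasFDerivAt (fun q : ℝ × ℝ => c q.2 - x_c)
      ((ContinuousLinearMap.toSpanSingleton ℝ (deriv c p.2)).comp
        (ContinuousLinearMap.snd ℝ ℝ ℝ)) p :=
    (hc.hasDerivAt.hasFDerivAt.comp p hasFDerivAt_snd).sub_const x_c
  refine ((hpow.smul hcurve).const_add x_c).congr_fderiv ?_
  ext <;> simp [scaledBoundaryFDeriv, smul_smul]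

end ScaledBoundary

theorem det_fst_smulRight_add_snd_smulRight (w₁ w₂ : ℝ × ℝ) :
    ((ContinuousLinearMap.fst ℝ ℝ ℝ).smulRight w₁ +
      (ContinuousLinearMap.snd ℝ ℝ ℝ).smulRight w₂).det = dot2 w₁ (perp2 w₂) := by
  rw [ContinuousLinearMap.det, ← LinearMap.det_toMatrix (Module.Basis.finTwoProd ℝ),
    Matrix.det_fin_two]
  simp [LinearMap.toMatrix_apply, dot2, perp2]
  ring

theorem det_scaledBoundaryFDeriv (x_c : ℝ × ℝ) (c : ℝ → ℝ × ℝ) (α : ℝ) {ξ : ℝ} (hξ : 0 < ξ)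
    (t : ℝ) :
    (scaledBoundaryFDeriv x_c c α (ξ, t)).det =
      α * ξ ^ (2 * α - 1) * dot2 (c t - x_c) (perp2 (deriv c t)) := by
  have hpow : ξ ^ (α - 1) * ξ ^ α = ξ ^ (2 * α - 1) := by
    rw [← Real.rpow_add hξ]; ring_nf
  rw [scaledBoundaryFDeriv, det_fst_smulRight_add_snd_smulRight, ← hpow]
  simp only [dot2, perp2, Prod.smul_fst, Prod.smul_snd, smul_eq_mul]
  ring

theorem abs_det_scaledBoundaryFDeriv_mul_div_rpow {x_c : ℝ × ℝ} {c : ℝ → ℝ × ℝ} {α : ℝ}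
    (hα : 0 ≤ α) {ξ t : ℝ} (hξ : 0 < ξ) (hct : c t ≠ x_c)
    (hccw : 0 ≤ dot2 (c t - x_c) (perp2 (deriv c t))) (y β : ℝ) :
    |(scaledBoundaryFDeriv x_c c α (ξ, t)).det| *
        (y / ‖scaledBoundaryMap x_c c α (ξ, t) - x_c‖ ^ β) =
      α * (y * ξ ^ (α * (2 - β) - 1) *
        (dot2 (c t - x_c) (perp2 (deriv c t)) / ‖c t - x_c‖ ^ β)) := by
  have hsplit : ξ ^ (2 * α - 1) = ξ ^ (α * (2 - β) - 1) * ξ ^ (α * β) := by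
    rw [← Real.rpow_add hξ]; ring_nf
  have hnorm : 0 < ‖c t - x_c‖ ^ β := Real.rpow_pos_of_pos (norm_pos_iff.2 (sub_ne_zero.2 hct)) β
  have hξβ : 0 < ξ ^ (α * β) := Real.rpow_pos_of_pos hξ _
  rw [det_scaledBoundaryFDeriv x_c c α hξ, abs_of_nonneg (by positivity),
    norm_scaledBoundaryMap_sub hξ.le, Real.mul_rpow (Real.rpow_nonneg hξ.le α) (norm_nonneg _),
    ← Real.rpow_mul hξ.le, hsplit]
  field_simp

theorem continuousOn_dot2_perp2_div_rpow {x_c : ℝ × ℝ} {c : ℝ → ℝ × ℝ} {S : Set ℝ}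
    (hc : ContDiff ℝ 1 c) (hcne : ∀ t ∈ S, c t ≠ x_c) (β : ℝ) :
    ContinuousOn (fun t => dot2 (c t - x_c) (perp2 (deriv c t)) / ‖c t - x_c‖ ^ β) S := by
  have hc' : Continuous (deriv c) := hc.continuous_deriv le_rfl
  have hc0 : Continuous c := hc.continuous
  refine ContinuousOn.div ?_ ?_ fun t ht => ?_
  · simp only [dot2, perp2]
    exact Continuous.continuousOn (by fun_prop)
  · exact (hc0.sub continuous_const).norm.continuousOn.rpow_const fun t ht =>
      Or.inl (norm_ne_zero_iff.2 (sub_ne_zero.2 (hcne t ht)))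
  · exact (Real.rpow_pos_of_pos (norm_pos_iff.2 (sub_ne_zero.2 (hcne t ht))) β).ne'

theorem setIntegral_Ioc_prod_Icc_eq_intervalIntegral {E : Type*} [NormedAddCommGroup E]
    [NormedSpace ℝ E] {a b c d : ℝ} (hab : a ≤ b) (hcd : c ≤ d) {G : ℝ × ℝ → E}
    (hG : IntegrableOn G (Ioc a b ×ˢ Icc c d)) :
    ∫ p in Ioc a b ×ˢ Icc c d, G p = ∫ t in c..d, ∫ ξ in a..b, G (ξ, t) := by
  rw [Measure.volume_eq_prod, ← setIntegral_prod_swap, setIntegral_prod,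
    integral_Icc_eq_integral_Ioc, intervalIntegral.integral_of_le hcd]
  · simp only [Prod.swap_prod_mk, intervalIntegral.integral_of_le hab]
  · exact (Measure.volume_eq_prod (α := ℝ) (β := ℝ) ▸ hG).swap

theorem continuousOn_scaledBoundaryIntegrand {T : Set (ℝ × ℝ)} {K S : Set ℝ} {x_c : ℝ × ℝ}
    {c : ℝ → ℝ × ℝ} {g : ℝ × ℝ → ℝ} {α e : ℝ} (hα : 0 ≤ α) (he : 0 ≤ e) (hc : ContDiff ℝ 1 c)
    (hcne : ∀ t ∈ S, c t ≠ x_c) (hmaps : MapsTo (scaledBoundaryMap x_c c α) (K ×ˢ S) T)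
    (hg : ContinuousOn g T) (β : ℝ) :
    ContinuousOn (fun p : ℝ × ℝ => g (scaledBoundaryMap x_c c α p) * p.1 ^ e *
      (dot2 (c p.2 - x_c) (perp2 (deriv c p.2)) / ‖c p.2 - x_c‖ ^ β)) (K ×ˢ S) :=
  ((hg.comp (continuous_scaledBoundaryMap hα hc.continuous).continuousOn hmaps).mul
    ((Real.continuous_rpow_const he).comp continuous_fst).continuousOn).mul
    ((continuousOn_dot2_perp2_div_rpow hc hcne β).comp continuous_snd.continuousOn
      fun _ hp => hp.2)

theorem gsb_weakly_singular_general
    (T : Set (ℝ × ℝ)) (x_c : ℝ × ℝ) (c : ℝ → ℝ × ℝ) (g : ℝ × ℝ → ℝ)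
    (β α : ℝ) (hα : 0 < α)
    (hαβ : 1 ≤ α * (2 - β))
    (hstar : StarConvex ℝ x_c T)
    (hc : ContDiff ℝ 1 c)
    (hcne : ∀ t ∈ Set.Icc (0:ℝ) 1, c t ≠ x_c)
    (hccw : ∀ t ∈ Set.Icc (0:ℝ) 1, 0 ≤ dot2 (c t - x_c) (perp2 (deriv c t)))
    (himage : (fun p : ℝ × ℝ => x_c + (p.1 ^ α) • (c p.2 - x_c)) ''
      (Set.Ioc (0:ℝ) 1 ×ˢ Set.Icc (0:ℝ) 1) = T \ {x_c})
    (hinj : Set.InjOn (fun p : ℝ × ℝ => x_c + (p.1 ^ α) • (c p.2 - x_c))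
      (Set.Ioc (0:ℝ) 1 ×ˢ Set.Icc (0:ℝ) 1))
    (hg : ContinuousOn g T) :
    ((∫ x in T, g x / ‖x - x_c‖ ^ β) =
      α * ∫ t in (0:ℝ)..1, ∫ ξ in (0:ℝ)..1,
        g (x_c + (ξ ^ α) • (c t - x_c)) * ξ ^ (α * (2 - β) - 1) *
          (dot2 (c t - x_c) (perp2 (deriv c t)) / ‖c t - x_c‖ ^ β)) ∧
    ∃ M : ℝ, ∀ ξ ∈ Set.Icc (0:ℝ) 1, ∀ t ∈ Set.Icc (0:ℝ) 1,
      |g (x_c + (ξ ^ α) • (c t - x_c)) * ξ ^ (α * (2 - β) - 1) *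
        (dot2 (c t - x_c) (perp2 (deriv c t)) / ‖c t - x_c‖ ^ β)| ≤ M := by
  set φ := scaledBoundaryMap x_c c α
  set s := Ioc (0:ℝ) 1 ×ˢ Icc (0:ℝ) 1
  have himage' : φ '' s = T \ {x_c} := himage
  have himageT : φ '' s ⊆ T := himage'.subset.trans sdiff_subset
  have hs : s.Nonempty := ⟨(1, 0), ⟨zero_lt_one, le_rfl⟩, left_mem_Icc.2 zero_le_one⟩
  have hxc : x_c ∈ T := hstar.mem ((hs.image φ).mono himageT)
  have hmaps : MapsTo φ (Icc 0 1 ×ˢ Icc 0 1) T :=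
    mapsTo_scaledBoundaryMap_Icc hα.ne' hxc (mapsTo_iff_image_subset.2 himageT)
  have hG := continuousOn_scaledBoundaryIntegrand hα.le (sub_nonneg.2 hαβ) hc hcne hmaps hg β
  obtain ⟨M, hM⟩ := (isCompact_Icc.prod isCompact_Icc).exists_bound_of_continuousOn hG
  refine ⟨?_, M, fun ξ hξ t ht => hM (ξ, t) ⟨hξ, ht⟩⟩
  calc ∫ x in T, g x / ‖x - x_c‖ ^ β = ∫ x in φ '' s, g x / ‖x - x_c‖ ^ β := by
        rw [himage']
        exact setIntegral_congr_set (sdiff_null_ae_eq_self (measure_singleton x_c)).symm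
    _ = ∫ p in s, |(scaledBoundaryFDeriv x_c c α p).det| * (g (φ p) / ‖φ p - x_c‖ ^ β) :=
        integral_image_eq_integral_abs_det_fderiv_smul volume
          (measurableSet_Ioc.prod measurableSet_Icc)
          (fun p hp => (hasFDerivAt_scaledBoundaryMap hp.1.1.ne'
            (hc.differentiable one_ne_zero _)).hasFDerivWithinAt) hinj _
    _ = α * ∫ p in s, g (φ p) * p.1 ^ (α * (2 - β) - 1) *
          (dot2 (c p.2 - x_c) (perp2 (deriv c p.2)) / ‖c p.2 - x_c‖ ^ β) := by
        rw [← integral_const_mul]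
        exact setIntegral_congr_fun (measurableSet_Ioc.prod measurableSet_Icc) fun p hp =>
          abs_det_scaledBoundaryFDeriv_mul_div_rpow hα.le hp.1.1 (hcne _ hp.2) (hccw _ hp.2) _ β
    _ = _ := by
        rw [setIntegral_Ioc_prod_Icc_eq_intervalIntegral zero_le_one zero_le_one
          ((hG.integrableOn_compact (isCompact_Icc.prod isCompact_Icc)).mono_set
            (prod_mono Ioc_subset_Icc_self subset_rfl))]
        rfl

/-- The generalized scaled boundary parametrization
`φ_α(ξ,t) = x_c + ξ^α (c(t) - x_c)` transforms a weakly singular integral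
`∫_T g(x)/‖x - x_c‖^β dx` (with `0 < β < 2`) into
`α ∫₀¹∫₀¹ g(φ_α(ξ,t)) ξ^{α(2-β)-1} ((c(t)-x_c)·c'⊥(t))/‖c(t)-x_c‖^β dξ dt`,
with the `ξ`-integrand bounded when `α(2-β) ≥ 1`. -/
theorem gsb_weakly_singular
    (T : Set (ℝ × ℝ)) (x_c : ℝ × ℝ) (c : ℝ → ℝ × ℝ) (g : ℝ × ℝ → ℝ)
    (β α : ℝ) (hβ0 : 0 < β) (hβ2 : β < 2) (hα : 0 < α)
    (hαβ : 1 ≤ α * (2 - β))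
    (hTmeas : MeasurableSet T)
    (hstar : StarConvex ℝ x_c T)
    (hc : ContDiff ℝ 1 c)
    (hcne : ∀ t ∈ Set.Icc (0:ℝ) 1, c t ≠ x_c)
    (hccw : ∀ t ∈ Set.Icc (0:ℝ) 1, 0 ≤ dot2 (c t - x_c) (perp2 (deriv c t)))
    (himage : (fun p : ℝ × ℝ => x_c + (p.1 ^ α) • (c p.2 - x_c)) ''
      (Set.Ioc (0:ℝ) 1 ×ˢ Set.Icc (0:ℝ) 1) = T \ {x_c})
    (hinj : Set.InjOn (fun p : ℝ × ℝ => x_c + (p.1 ^ α) • (c p.2 - x_c))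
      (Set.Ioc (0:ℝ) 1 ×ˢ Set.Icc (0:ℝ) 1))
    (hg : ContinuousOn g T) (hgbdd : ∃ M : ℝ, ∀ x ∈ T, |g x| ≤ M) :
    ((∫ x in T, g x / ‖x - x_c‖ ^ β) =
      α * ∫ t in (0:ℝ)..1, ∫ ξ in (0:ℝ)..1,
        g (x_c + (ξ ^ α) • (c t - x_c)) * ξ ^ (α * (2 - β) - 1) *
          (dot2 (c t - x_c) (perp2 (deriv c t)) / ‖c t - x_c‖ ^ β)) ∧
    ∃ M : ℝ, ∀ ξ ∈ Set.Icc (0:ℝ) 1, ∀ t ∈ Set.Icc (0:ℝ) 1,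
      |g (x_c + (ξ ^ α) • (c t - x_c)) * ξ ^ (α * (2 - β) - 1) *
        (dot2 (c t - x_c) (perp2 (deriv c t)) / ‖c t - x_c‖ ^ β)| ≤ M :=
  gsb_weakly_singular_general T x_c c g β α hα hαβ hstar hc hcne hccw himage hinj hg
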